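/- arXiv:2006.14813 — 2 statements merged into one kernel-verified Lean document; each statement's English description precedes it below -/
import Mathlib

section
/- Let p, r be natural numbers, N, M : Fin p → ℕ, and for each i let A i be a real matrix in Matrix (Fin (M i)) (Fin (N i)) ℝ. If a tensor T : (∀ i : Fin p, Fin (N i)) → ℍ has rank at most r, then the tensor S : (∀ i : Fin p, Fin (M i)) → ℍ defined by S x = ∑ over all y ∈ ∀ i, Fin (N i) of (∏ i, A i (x i) (y i)) • T y also has rank at most r. Moreover, if M = N and every A i is an invertible square matrix, then S has rank at most r if and only if T has rank at most r. -/
/-- A `p`-way tensor `T` of size `N 0 × ⋯ × N (p-1)` over the quaternions has rank at most `r`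
if it is a sum of `r` simple tensors (with ordered quaternion products). -/
def HasRankLE (p r : ℕ) (N : Fin p → ℕ) (T : (∀ i : Fin p, Fin (N i)) → Quaternion ℝ) : Prop :=
  ∃ a : Fin r → ∀ i : Fin p, Fin (N i) → Quaternion ℝ,
    ∀ x : ∀ i : Fin p, Fin (N i), T x = ∑ l : Fin r, (List.ofFn fun i => a l i (x i)).prod

lemma keyR {p : ℕ} (N : Fin p → ℕ) (g : ∀ i, Fin (N i) → ℝ) :
    (∏ i, ∑ n, g i n) = ∑ y : ∀ i : Fin p, Fin (N i), ∏ i, g i (y i) := by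
  rw [Finset.prod_univ_sum (fun _ => Finset.univ) g, Fintype.piFinset_univ]

lemma key : ∀ (p : ℕ) (N : Fin p → ℕ) (c : ∀ i, Fin (N i) → ℝ)
    (v : ∀ i, Fin (N i) → Quaternion ℝ),
    (List.ofFn fun i => ∑ n, c i n • v i n).prod
      = ∑ y : ∀ i : Fin p, Fin (N i), (∏ i, c i (y i)) • (List.ofFn fun i => v i (y i)).prod := by
  intro p
  induction p with
  | zero => intro N c v; simp
  | succ p ih =>
    intro N c v
    rw [List.ofFn_succ, List.prod_cons,
      ih (fun i => N i.succ) (fun i => c i.succ) (fun i => v i.succ),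
      ← (Fin.consEquiv fun i => Fin (N i)).sum_comp, Fintype.sum_prod_type,
      Finset.sum_mul_sum]
    refine Finset.sum_congr rfl fun y0 _ => Finset.sum_congr rfl fun ys _ => ?_
    rw [smul_mul_smul_comm]
    simp [Fin.consEquiv, Fin.prod_univ_succ, List.ofFn_succ]

lemma fwd (p r : ℕ) (N M : Fin p → ℕ) (A : ∀ i : Fin p, Matrix (Fin (M i)) (Fin (N i)) ℝ)
    (T : (∀ i : Fin p, Fin (N i)) → Quaternion ℝ)
    (S : (∀ i : Fin p, Fin (M i)) → Quaternion ℝ)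
    (hS : ∀ x, S x = ∑ y : ∀ i : Fin p, Fin (N i), (∏ i, A i (x i) (y i)) • T y)
    (hT : HasRankLE p r N T) : HasRankLE p r M S := by
  obtain ⟨a, ha⟩ := hT
  refine ⟨fun l i m => ∑ n, A i m n • a l i n, fun x => ?_⟩
  rw [hS x]
  simp only [ha, Finset.smul_sum]
  rw [Finset.sum_comm]
  exact Finset.sum_congr rfl fun l _ =>
    (key p N (fun i => A i (x i)) (a l)).symm

theorem multilinear_rank_bound (p r : ℕ) :
    (∀ (N M : Fin p → ℕ) (A : ∀ i : Fin p, Matrix (Fin (M i)) (Fin (N i)) ℝ)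
      (T : (∀ i : Fin p, Fin (N i)) → Quaternion ℝ)
      (S : (∀ i : Fin p, Fin (M i)) → Quaternion ℝ),
      (∀ x, S x = ∑ y : ∀ i : Fin p, Fin (N i), (∏ i, A i (x i) (y i)) • T y) →
      HasRankLE p r N T → HasRankLE p r M S) ∧
    (∀ (N : Fin p → ℕ) (A : ∀ i : Fin p, Matrix (Fin (N i)) (Fin (N i)) ℝ),
      (∀ i, IsUnit (A i)) →
      ∀ (T S : (∀ i : Fin p, Fin (N i)) → Quaternion ℝ),
      (∀ x, S x = ∑ y : ∀ i : Fin p, Fin (N i), (∏ i, A i (x i) (y i)) • T y) →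
      (HasRankLE p r N S ↔ HasRankLE p r N T)) := by
  refine ⟨fwd p r, fun N A hA T S hS => ⟨fun hS' => ?_, fwd p r N N A T S hS⟩⟩
  have hT : ∀ x, T x = ∑ y : ∀ i : Fin p, Fin (N i), (∏ i, (A i)⁻¹ (x i) (y i)) • S y := by
    intro x
    symm
    have hinv : ∀ i, (A i)⁻¹ * A i = 1 := fun i =>
      Matrix.nonsing_inv_mul _ ((Matrix.isUnit_iff_isUnit_det _).mp (hA i))
    calc ∑ y : ∀ i : Fin p, Fin (N i), (∏ i, (A i)⁻¹ (x i) (y i)) • S y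
        = ∑ y : ∀ i : Fin p, Fin (N i), ∑ z : ∀ i : Fin p, Fin (N i),
            (∏ i, (A i)⁻¹ (x i) (y i) * A i (y i) (z i)) • T z := by
          refine Finset.sum_congr rfl fun y _ => ?_
          rw [hS y, Finset.smul_sum]
          refine Finset.sum_congr rfl fun z _ => ?_
          rw [smul_smul, ← Finset.prod_mul_distrib]
      _ = ∑ z : ∀ i : Fin p, Fin (N i),
            (∏ i, ((A i)⁻¹ * A i) (x i) (z i)) • T z := by
          rw [Finset.sum_comm]
          refine Finset.sum_congr rfl fun z _ => ?_
          rw [← Finset.sum_smul]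
          congr 1
          rw [← keyR N (fun i n => (A i)⁻¹ (x i) n * A i n (z i))]
          exact Finset.prod_congr rfl fun i _ => (Matrix.mul_apply).symm
      _ = T x := by
          simp only [hinv, Matrix.one_apply]
          have : ∀ z : ∀ i : Fin p, Fin (N i),
              (∏ i, if x i = z i then (1:ℝ) else 0) = if x = z then 1 else 0 := by
            intro z
            by_cases h : x = z
            · subst h; simp
            · obtain ⟨i, hi⟩ := Function.ne_iff.mp h
              rw [if_neg h]
              exact Finset.prod_eq_zero (Finset.mem_univ i) (if_neg hi)
          simp only [this, ite_smul, one_smul, zero_smul]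
          rw [Finset.sum_ite_eq Finset.univ x, if_pos (Finset.mem_univ x)]
  exact fwd p r N N (fun i => (A i)⁻¹) S T hT hS'
end

section
/- Let α, β ∈ ℍ be pure imaginary quaternions (i.e. with zero real part) and let γ ∈ ℍ. Suppose x ∈ ℍ satisfies x² + α*x + x*β - γ = 0 and the real part of x is nonzero. Then the 2×2 quaternion matrix [[-α, γ],[1, β]] is diagonalizable over ℍ: there exist P, P' ∈ Matrix (Fin 2) (Fin 2) ℍ with P * P' = 1 and P' * P = 1 such that P' * [[-α, γ],[1, β]] * P is a diagonal matrix. -/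
/-!
Since `x` solves the quadratic, conjugating `!![-α, γ; 1, β]` by `!![x, 1; 1, 0]` makes it upper
triangular with diagonal `l = x + β`, `m = -α - x`. As `α` and `β` are pure, `l.re = x.re` and
`m.re = -x.re` differ, so the Sylvester equation `l * s - s * m = 1` has a solution, and
conjugating by `!![1, -s; 0, 1]` clears the corner entry. The solution is
`s = D⁻¹ * (l - star m)`, where `D = l * l - (2 * m.re) • l + normSq m` is the real minimal
polynomial of `m` evaluated at `l`: it commutes with `l`, and it vanishes only if `l` is conjugate
to `m`, which forces `l.re = m.re`.
-/

namespace Quaternion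

theorem mul_sub_star_sub_sub_star_mul {R : Type*} [CommRing R] (l m : ℍ[R]) :
    l * (l - star m) - (l - star m) * m = l * l - (2 * m.re) • l + ((normSq m : R) : ℍ[R]) := by
  ext <;>
    simp only [re_add, re_sub, re_mul, re_smul, re_coe, re_star, imI_add, imI_sub, imI_mul,
      imI_smul, imI_coe, imI_star, imJ_add, imJ_sub, imJ_mul, imJ_smul, imJ_coe, imJ_star,
      imK_add, imK_sub, imK_mul, imK_smul, imK_coe, imK_star, normSq_def', smul_eq_mul] <;>
    ring

section LinearOrderedField

variable {R : Type*} [Field R] [LinearOrder R] [IsStrictOrderedRing R]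

theorem mul_self_sub_smul_add_normSq_ne_zero {l m : ℍ[R]} (h : l.re ≠ m.re) :
    l * l - (2 * m.re) • l + ((normSq m : R) : ℍ[R]) ≠ 0 := by
  intro h0
  have hr : l.re - m.re ≠ 0 := sub_ne_zero.mpr h
  have him : l.imI = 0 ∧ l.imJ = 0 ∧ l.imK = 0 := by
    have hI := congrArg (·.imI) h0
    have hJ := congrArg (·.imJ) h0
    have hK := congrArg (·.imK) h0
    simp only [imI_add, imI_sub, imI_smul, imI_mul, imI_coe, imI_zero, imJ_add, imJ_sub,
      imJ_smul, imJ_mul, imJ_coe, imJ_zero, imK_add, imK_sub, imK_smul, imK_mul, imK_coe,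
      imK_zero, smul_eq_mul] at hI hJ hK
    refine ⟨?_, ?_, ?_⟩ <;> refine (mul_eq_zero.mp ?_).resolve_left hr
    · linear_combination hI / 2
    · linear_combination hJ / 2
    · linear_combination hK / 2
  have hre := congrArg (·.re) h0
  simp only [re_add, re_sub, re_smul, re_mul, re_coe, re_zero, normSq_def', him,
    smul_eq_mul] at hre
  nlinarith [sq_nonneg m.imI, sq_nonneg m.imJ, sq_nonneg m.imK, mul_self_pos.mpr hr]

theorem exists_mul_sub_mul_eq_one {l m : ℍ[R]} (h : l.re ≠ m.re) : ∃ s, l * s - s * m = 1 := by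
  set D := l * l - (2 * m.re) • l + ((normSq m : R) : ℍ[R])
  have hD : Commute D l :=
    (((Commute.refl l).mul_left (Commute.refl l)).sub_left
      ((Commute.refl l).smul_left _)).add_left (coe_commutes _ _)
  refine ⟨D⁻¹ * (l - star m), ?_⟩
  rw [← mul_assoc, ← hD.inv_left₀.eq, mul_assoc, mul_assoc, ← mul_sub,
    mul_sub_star_sub_sub_star_mul, inv_mul_cancel₀ (mul_self_sub_smul_add_normSq_ne_zero h)]

end LinearOrderedField

end Quaternion

namespace Matrix

section IsDiagonalizable

variable {n R : Type*} [Fintype n] [DecidableEq n] [Ring R]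

def IsDiagonalizable (M : Matrix n n R) : Prop :=
  ∃ P P' : Matrix n n R, P * P' = 1 ∧ P' * P = 1 ∧ (P' * M * P).IsDiag

theorem IsDiag.isDiagonalizable {M : Matrix n n R} (h : M.IsDiag) : M.IsDiagonalizable :=
  ⟨1, 1, one_mul 1, one_mul 1, by simpa only [one_mul, mul_one] using h⟩

theorem IsDiagonalizable.of_conj {M Q Q' : Matrix n n R} (hQ : Q * Q' = 1) (hQ' : Q' * Q = 1)
    (h : (Q' * M * Q).IsDiagonalizable) : M.IsDiagonalizable := by
  obtain ⟨P, P', hP, hP', hD⟩ := h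
  refine ⟨Q * P, P' * Q', ?_, ?_, by simpa only [mul_assoc] using hD⟩
  · rw [mul_assoc, ← mul_assoc P, hP, one_mul, hQ]
  · rw [mul_assoc, ← mul_assoc Q', hQ', one_mul, hP']

end IsDiagonalizable

variable {R : Type*} [Ring R]

theorem isDiagonalizable_of_mul_sub_mul_eq_one {l m s : R} (hs : l * s - s * m = 1) :
    !![l, 1; 0, m].IsDiagonalizable := by
  refine IsDiagonalizable.of_conj (Q := !![1, -s; 0, 1]) (Q' := !![1, s; 0, 1])
    (by simp [one_fin_two]) (by simp [one_fin_two]) ?_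
  have hconj : !![1, s; 0, 1] * !![l, 1; 0, m] * !![1, -s; 0, 1] =
      !![l, 1 - (l * s - s * m); 0, m] := by
    rw [mul_fin_two, mul_fin_two]
    congr 1
    noncomm_ring
  rw [hconj, hs, sub_self, ← diagonal_vec2]
  exact (isDiag_diagonal _).isDiagonalizable

theorem IsDiagonalizable.of_root {a b d x : R} (hx : x * x - a * x + x * d = b)
    (h : !![x + d, 1; 0, a - x].IsDiagonalizable) : !![a, b; 1, d].IsDiagonalizable := by
  refine IsDiagonalizable.of_conj (Q := !![x, 1; 1, 0]) (Q' := !![0, 1; 1, -x])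
    (by simp [one_fin_two]) (by simp [one_fin_two]) ?_
  convert h using 1
  rw [← hx, mul_fin_two, mul_fin_two]
  congr 1
  noncomm_ring

end Matrix

open Matrix in
theorem diagonalizable_of_quadratic_solution (α β γ x : Quaternion ℝ)
    (hα : α.re = 0) (hβ : β.re = 0)
    (hx : x ^ 2 + α * x + x * β - γ = 0) (hre : x.re ≠ 0) :
    ∃ P P' : Matrix (Fin 2) (Fin 2) (Quaternion ℝ),
      P * P' = 1 ∧ P' * P = 1 ∧ (P' * !![-α, γ; 1, β] * P).IsDiag := by
  have hroot : x * x - -α * x + x * β = γ := by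
    rw [neg_mul, sub_neg_eq_add, ← sq]
    exact sub_eq_zero.mp hx
  have hre_ne : (x + β).re ≠ (-α - x).re := by
    simp only [Quaternion.re_add, Quaternion.re_sub, Quaternion.re_neg, hα, hβ]
    contrapose! hre
    linarith
  obtain ⟨s, hs⟩ := Quaternion.exists_mul_sub_mul_eq_one hre_ne
  exact (isDiagonalizable_of_mul_sub_mul_eq_one hs).of_root hroot
end
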